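/- arXiv:2605.11142 — 4 statements merged into one kernel-verified Lean document; each statement's English description precedes it below -/
import Mathlib

section
/- Let K be an N×N real symmetric positive semidefinite matrix of rank r, with eigenvalues λ_1 ≥ λ_2 ≥ ⋯ ≥ λ_r > 0 and orthonormal eigenvectors u_1, …, u_r such that K = Σ_{j=1}^r λ_j u_j u_jᵀ. Let 1 ≤ k ≤ r and suppose λ_k > λ_{k+1}, where λ_{r+1} := 0. Then the spectral prefix K_k := Σ_{j=1}^k λ_j u_j u_jᵀ is the unique minimizer of ‖K − M‖_F² over all N×N real symmetric positive semidefinite matrices M with rank(M) ≤ k: any such M satisfying ‖K − M‖_F² ≤ ‖K − M'‖_F² for every PSD M' of rank at most k must equal K_k. -/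
/-!
A minimiser `M` cannot be improved along the congruences `t ↦ (1 + t A) M (1 + t A)ᵀ`, which
preserve positivity and rank. For `A = (K - M) M` the derivative of `‖K - (1 + t A) M (1 + t A)ᵀ‖²`
at `t = 0` is `-4 ‖A‖²`, so `(K - M) M = 0`. Hence `M = Q K` for the orthogonal projection `Q` onto
the range of `M`, and `‖K - X‖² = ‖K‖² - ‖X‖²` both for `X = M` and for `X = K_k`; optimality
becomes `‖K_k‖² ≤ ‖Q K‖² = ∑ λⱼ² sⱼ` with `sⱼ = uⱼᵀ Q uⱼ`. The weights `sⱼ` lie in `[0, 1]` and sum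
to at most `tr Q = rank M ≤ k`, so the gap `λ_k > λ_{k+1}` forces `sⱼ = 1` for `j < k` and `sⱼ = 0`
otherwise. Then `Q uⱼ` is `uⱼ` or `0`, and `Q K = K_k`.
-/

open Matrix Finset

def frobSq {N : ℕ} (A : Matrix (Fin N) (Fin N) ℝ) : ℝ :=
  ∑ i, ∑ j, (A i j) ^ 2

theorem Matrix.IsHermitian.isSymm {n α : Type*} [Star α] [TrivialStar α] {A : Matrix n n α}
    (hA : A.IsHermitian) : A.IsSymm :=
  (conjTranspose_eq_transpose_of_trivial A).symm.trans hA

theorem Matrix.trace_transpose_mul_eq_sum {n R : Type*} [Fintype n] [CommSemiring R]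
    (A B : Matrix n n R) : (Aᵀ * B).trace = ∑ i, ∑ j, A i j * B i j := by
  simp only [trace, Matrix.diag, mul_apply, transpose_apply]
  exact Finset.sum_comm

theorem Matrix.trace_eq_rank_of_isIdempotentElem {n R : Type*} [Fintype n] [DecidableEq n]
    [Field R] {Q : Matrix n n R} (hQ : IsIdempotentElem Q) : Q.trace = Q.rank := by
  have h : IsIdempotentElem (toLin' Q) := by
    rw [IsIdempotentElem, Module.End.mul_eq_comp, ← Matrix.toLin'_mul, hQ.eq]
  rw [← trace_toLin'_eq, (LinearMap.IsIdempotentElem.isProj_range _ h).trace]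
  rfl

theorem Matrix.rank_sum_vecMulVec_le {ι m n R : Type*} [Fintype n] [CommSemiring R]
    [StrongRankCondition R] (s : Finset ι) (x : ι → m → R) (y : ι → n → R) :
    (∑ j ∈ s, vecMulVec (x j) (y j)).rank ≤ #s := by
  have h : ∑ j ∈ s, vecMulVec (x j) (y j) =
      of (fun i (j : s) => x j i) * of (fun (j : s) i => y j i) := by
    ext i i'
    simp [mul_apply, sum_apply, vecMulVec_apply, Finset.sum_attach s (fun j => x j i * y j i')]
  rw [h]
  exact (rank_mul_le_left _ _).trans ((rank_le_card_width _).trans (by simp))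

theorem Matrix.IsHermitian.exists_isIdempotentElem_mul_eq_self {n : Type*} [Fintype n]
    [DecidableEq n] {M : Matrix n n ℝ} (hM : M.IsHermitian) :
    ∃ Q : Matrix n n ℝ, Q.IsHermitian ∧ IsIdempotentElem Q ∧ Q * M = M ∧ ∃ Y, Q = Y * M := by
  have hc (f : ℝ → ℝ) : ContinuousOn f (spectrum ℝ M) := M.finite_spectrum.continuousOn f
  have hid : cfc id M = M := cfc_id ℝ M hM
  -- `x⁻¹ * x` is the indicator of `x ≠ 0` because `0⁻¹ = 0`.
  refine ⟨cfc (fun x : ℝ => x⁻¹ * x) M, cfc_predicate _ M, ?_, ?_, cfc (fun x : ℝ => x⁻¹) M, ?_⟩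
  · rw [IsIdempotentElem, ← cfc_mul _ _ M (hc _) (hc _)]
    refine cfc_congr fun x _ => ?_
    rcases eq_or_ne x 0 with rfl | hx <;> simp [*]
  · calc cfc (fun x : ℝ => x⁻¹ * x) M * M = cfc (fun x : ℝ => x⁻¹ * x) M * cfc id M := by rw [hid]
      _ = cfc id M := by
        rw [← cfc_mul _ _ M (hc _) (hc _)]
        refine cfc_congr fun x _ => ?_
        rcases eq_or_ne x 0 with rfl | hx <;> simp [*]
      _ = M := hid
  · exact (cfc_mul (fun x : ℝ => x⁻¹) id M (hc _) (hc _)).trans (by rw [hid])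

section Projection

variable {n R : Type*} [Fintype n] [CommRing R] {Q : Matrix n n R}

theorem Matrix.mulVec_dotProduct_mulVec_of_isIdempotentElem (hQs : Q.IsSymm)
    (hQ : IsIdempotentElem Q) (v : n → R) : (Q *ᵥ v) ⬝ᵥ (Q *ᵥ v) = v ⬝ᵥ (Q *ᵥ v) := by
  rw [dotProduct_mulVec, ← mulVec_transpose, hQs.eq, mulVec_mulVec, hQ.eq, dotProduct_comm]

theorem Matrix.sub_mulVec_dotProduct_sub_mulVec_of_isIdempotentElem (hQs : Q.IsSymm)
    (hQ : IsIdempotentElem Q) (v : n → R) :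
    (v - Q *ᵥ v) ⬝ᵥ (v - Q *ᵥ v) = v ⬝ᵥ v - v ⬝ᵥ (Q *ᵥ v) := by
  simp only [sub_dotProduct, dotProduct_sub, mulVec_dotProduct_mulVec_of_isIdempotentElem hQs hQ,
    dotProduct_comm (Q *ᵥ v) v]
  ring

end Projection

section Orthonormal

variable {ι n R : Type*} [Fintype n] [CommSemiring R] [DecidableEq ι] {u : ι → n → R}

theorem sum_smul_vecMulVec_mul_sum_smul_vecMulVec
    (hu : ∀ i j, u i ⬝ᵥ u j = if i = j then 1 else 0) (s t : Finset ι) (a b : ι → R) :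
    (∑ i ∈ s, a i • vecMulVec (u i) (u i)) * (∑ j ∈ t, b j • vecMulVec (u j) (u j)) =
      ∑ j ∈ s ∩ t, (a j * b j) • vecMulVec (u j) (u j) := by
  have hprod (i j : ι) : (a i • vecMulVec (u i) (u i)) * (b j • vecMulVec (u j) (u j)) =
      if i = j then (a j * b j) • vecMulVec (u j) (u j) else 0 := by
    split_ifs with h
    · subst h; simp [vecMulVec_mul_vecMulVec, hu, smul_smul, mul_comm]
    · simp [vecMulVec_mul_vecMulVec, hu, h]
  simp_rw [Finset.sum_mul_sum, hprod, Finset.sum_ite_eq, Finset.sum_ite_mem]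

theorem trace_sum_smul_vecMulVec (hu : ∀ i j, u i ⬝ᵥ u j = if i = j then 1 else 0)
    (s : Finset ι) (a : ι → R) : (∑ j ∈ s, a j • vecMulVec (u j) (u j)).trace = ∑ j ∈ s, a j := by
  simp [trace_sum, hu]

end Orthonormal

section RealOrthonormal

variable {ι n : Type*} [Fintype n] {u : ι → n → ℝ}

theorem posSemidef_sum_smul_vecMulVec (s : Finset ι) {a : ι → ℝ} (ha : ∀ j ∈ s, 0 ≤ a j) :
    (∑ j ∈ s, a j • vecMulVec (u j) (u j)).PosSemidef :=
  posSemidef_sum s fun j hj => by simpa using (posSemidef_vecMulVec_self_star (u j)).smul (ha j hj)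

variable [DecidableEq ι]

theorem sum_sub_sum_smul_vecMulVec_mul_eq_zero (hu : ∀ i j, u i ⬝ᵥ u j = if i = j then 1 else 0)
    {s t : Finset ι} (hst : s ⊆ t) (a : ι → ℝ) :
    (∑ j ∈ t, a j • vecMulVec (u j) (u j) - ∑ j ∈ s, a j • vecMulVec (u j) (u j)) *
      ∑ j ∈ s, a j • vecMulVec (u j) (u j) = 0 := by
  rw [sub_mul, sum_smul_vecMulVec_mul_sum_smul_vecMulVec hu,
    sum_smul_vecMulVec_mul_sum_smul_vecMulVec hu, inter_eq_right.2 hst, inter_self, sub_self]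

variable [Fintype ι]

theorem mul_sum_smul_vecMulVec_eq_of_mulVec_eq {Q : Matrix n n ℝ} {A : Finset ι}
    (hQu : ∀ j, Q *ᵥ u j = if j ∈ A then u j else 0) (a : ι → ℝ) :
    Q * ∑ j, a j • vecMulVec (u j) (u j) = ∑ j ∈ A, a j • vecMulVec (u j) (u j) := by
  have hterm (j : ι) : Q * (a j • vecMulVec (u j) (u j)) =
      if j ∈ A then a j • vecMulVec (u j) (u j) else 0 := by
    rw [mul_smul_comm, mul_vecMulVec, hQu]
    split_ifs <;> simp
  simp only [mul_sum, hterm, sum_ite_mem, univ_inter]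

theorem sum_dotProduct_mulVec_le_trace [DecidableEq n]
    (hu : ∀ i j, u i ⬝ᵥ u j = if i = j then 1 else 0) {Q : Matrix n n ℝ} (hQ : Q.PosSemidef) :
    ∑ j, u j ⬝ᵥ (Q *ᵥ u j) ≤ Q.trace := by
  set U := ∑ j, vecMulVec (u j) (u j)
  have hUU : (1 - U) * (1 - U) = 1 - U := by
    have : U * U = U := by
      simpa [U] using sum_smul_vecMulVec_mul_sum_smul_vecMulVec hu univ univ 1 1
    rw [sub_mul, mul_sub, mul_sub, this]; simp
  have hUs : (1 - U)ᴴ = 1 - U := by simp [U, transpose_sum, transpose_vecMulVec]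
  have hQU : ∑ j, u j ⬝ᵥ (Q *ᵥ u j) = (Q * U).trace := by
    simp [U, mul_sum, trace_sum, mul_vecMulVec, dotProduct_comm]
  -- `tr Q - tr (Q U) = tr ((1 - U) Q (1 - U))`, with `1 - U` the projection orthogonal to the `u j`.
  have hnonneg := (hQ.conjTranspose_mul_mul_same (1 - U)).trace_nonneg
  rw [hUs, trace_mul_comm, ← mul_assoc, hUU, sub_mul, one_mul, trace_sub, trace_mul_comm U]
    at hnonneg
  linarith

end RealOrthonormal

theorem eq_indicator_of_sum_le_sum_mul {ι : Type*} [Fintype ι] [DecidableEq ι] {A : Finset ι}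
    {w s : ι → ℝ} {c : ℝ} (hc : 0 ≤ c) (hA : ∀ j ∈ A, c < w j) (hAc : ∀ j ∉ A, w j ≤ c)
    (hs0 : ∀ j, 0 ≤ s j) (hs1 : ∀ j, s j ≤ 1) (hsum : ∑ j, s j ≤ #A)
    (hw : ∑ j ∈ A, w j ≤ ∑ j, w j * s j) (j : ι) : s j = if j ∈ A then 1 else 0 := by
  have hsplit_s := sum_add_sum_compl A s
  have hsplit_ws := sum_add_sum_compl A fun j => w j * s j
  have hAc_le : ∑ j ∈ Aᶜ, w j * s j ≤ c * ∑ j ∈ Aᶜ, s j := by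
    rw [mul_sum]
    exact sum_le_sum fun j hj => mul_le_mul_of_nonneg_right (hAc j (mem_compl.1 hj)) (hs0 j)
  have hgap_nonneg : ∀ j ∈ A, 0 ≤ (w j - c) * (1 - s j) := fun j hj =>
    mul_nonneg (sub_nonneg.2 (hA j hj).le) (sub_nonneg.2 (hs1 j))
  have hgap_sum : ∑ j ∈ A, (w j - c) * (1 - s j) = 0 := by
    refine le_antisymm ?_ (sum_nonneg hgap_nonneg)
    have hcard : c * ∑ j ∈ Aᶜ, s j ≤ c * (#A - ∑ j ∈ A, s j) :=
      mul_le_mul_of_nonneg_left (by linarith) hc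
    simp only [sub_mul, mul_sub, mul_one, sum_sub_distrib, ← mul_sum, sum_const, nsmul_eq_mul]
    linarith
  have hA_one : ∀ j ∈ A, s j = 1 := fun j hj => by
    have := (sum_eq_zero_iff_of_nonneg hgap_nonneg).1 hgap_sum j hj
    rcases mul_eq_zero.1 this with h | h
    · linarith [hA j hj]
    · linarith
  have hAc_zero : ∀ j ∈ Aᶜ, s j = 0 := by
    refine (sum_eq_zero_iff_of_nonneg fun j _ => hs0 j).1
      (le_antisymm ?_ (sum_nonneg fun j _ => hs0 j))
    rw [sum_congr rfl hA_one, sum_const, nsmul_one] at hsplit_s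
    linarith
  split_ifs with hj
  · exact hA_one j hj
  · exact hAc_zero j (mem_compl.2 hj)

theorem exists_sq_threshold {r k : ℕ} {lam : Fin r → ℝ} (hpos : ∀ j, 0 < lam j)
    (hanti : Antitone lam)
    (hgap : ∀ (hk : k < r) (hk' : k - 1 < r), lam ⟨k, hk⟩ < lam ⟨k - 1, hk'⟩) :
    ∃ c, 0 ≤ c ∧ (∀ j : Fin r, (j : ℕ) < k → c < lam j ^ 2) ∧
      ∀ j : Fin r, ¬ (j : ℕ) < k → lam j ^ 2 ≤ c := by
  by_cases hk : k < r
  · refine ⟨lam ⟨k, hk⟩ ^ 2, sq_nonneg _, fun j hj => ?_, fun j hj => ?_⟩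
    · have hlt := hgap hk (by omega)
      have hle : lam ⟨k - 1, by omega⟩ ≤ lam j := hanti (Fin.le_iff_val_le_val.2 (by dsimp; omega))
      exact pow_lt_pow_left₀ (hlt.trans_le hle) (hpos _).le two_ne_zero
    · exact pow_le_pow_left₀ (hpos j).le (hanti (Fin.mk_le_of_le_val (by omega))) 2
  · exact ⟨0, le_rfl, fun j _ => pow_pos (hpos j) 2, fun j hj => absurd (by omega) hj⟩

section Frobenius

variable {N : ℕ}

theorem frobSq_eq_trace (A : Matrix (Fin N) (Fin N) ℝ) : frobSq A = (Aᵀ * A).trace := by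
  simp only [frobSq, trace_transpose_mul_eq_sum, sq]

theorem frobSq_sub_of_sub_mul_eq_zero {K X : Matrix (Fin N) (Fin N) ℝ} (hK : K.IsSymm)
    (hX : X.IsSymm) (h : (K - X) * X = 0) : frobSq (K - X) = frobSq K - frobSq X := by
  have hKX : (K * X).trace = (X * X).trace := by
    rw [← sub_eq_zero, ← trace_sub, ← sub_mul, h, trace_zero]
  simp only [frobSq_eq_trace, transpose_sub, hK.eq, hX.eq, sub_mul, mul_sub, trace_sub,
    trace_mul_comm X K, hKX]
  ring

theorem hasDerivAt_sq_add_mul_add_sq_mul (a b c : ℝ) :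
    HasDerivAt (fun t : ℝ => (a + t * b + t ^ 2 * c) ^ 2) (2 * (a * b)) 0 := by
  have h : HasDerivAt (fun t : ℝ => a + t * b + t ^ 2 * c) b 0 := by
    simpa using (((hasDerivAt_id (0 : ℝ)).mul_const b).const_add a).fun_add
      ((hasDerivAt_pow 2 (0 : ℝ)).mul_const c)
  exact (h.fun_pow 2).congr_deriv (by simp; ring)

theorem hasDerivAt_frobSq_add_smul_add_sq_smul (D E F : Matrix (Fin N) (Fin N) ℝ) :
    HasDerivAt (fun t : ℝ => frobSq (D + t • E + t ^ 2 • F)) (2 * (Dᵀ * E).trace) 0 := by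
  have hsum := HasDerivAt.fun_sum (u := univ) fun i _ => HasDerivAt.fun_sum (u := univ)
    fun j _ => hasDerivAt_sq_add_mul_add_sq_mul (D i j) (E i j) (F i j)
  simp only [← Finset.mul_sum, ← trace_transpose_mul_eq_sum] at hsum
  exact hsum

theorem sub_mul_eq_zero_of_forall_frobSq_le {K M : Matrix (Fin N) (Fin N) ℝ}
    (hK : K.IsSymm) (hM : M.IsSymm)
    (hmin : ∀ B, frobSq (K - M) ≤ frobSq (K - B * M * Bᵀ)) : (K - M) * M = 0 := by
  set D := K - M
  set A := D * M
  set E := -(A * M + M * Aᵀ)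
  set F := -(A * M * Aᵀ)
  have hcurve (t : ℝ) : K - (1 + t • A) * M * (1 + t • A)ᵀ = D + t • E + t ^ 2 • F := by
    simp only [transpose_add, transpose_smul, transpose_one, add_mul, mul_add, one_mul, mul_one,
      Matrix.smul_mul, Matrix.mul_smul, smul_smul, D, E, F]
    module
  have hlocmin : IsLocalMin (fun t : ℝ => frobSq (D + t • E + t ^ 2 • F)) 0 :=
    Filter.Eventually.of_forall fun t => by simpa [← hcurve] using hmin (1 + t • A)
  have hD : Dᵀ = D := by simp [D, hK.eq, hM.eq]
  have hMD : M * D = Aᵀ := by simp [A, hD, hM.eq]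
  have htrace : (Dᵀ * E).trace = -2 * (Aᵀ * A).trace := by
    have h1 : (D * (A * M)).trace = (Aᵀ * A).trace := by
      rw [trace_mul_comm, mul_assoc, hMD, trace_mul_comm]
    have h2 : (D * (M * Aᵀ)).trace = (Aᵀ * A).trace := by
      rw [← mul_assoc, trace_mul_comm]
    rw [hD, mul_neg, trace_neg, mul_add, trace_add, h1, h2]
    ring
  have hA : (Aᵀ * A).trace = 0 := by
    linarith [hlocmin.hasDerivAt_eq_zero (hasDerivAt_frobSq_add_smul_add_sq_smul D E F)]
  exact trace_conjTranspose_mul_self_eq_zero_iff.mp (by rwa [conjTranspose_eq_transpose_of_trivial])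

theorem exists_projection_mul_eq_of_sub_mul_eq_zero {n : Type*} [Fintype n] [DecidableEq n]
    {K M : Matrix n n ℝ} (hK : K.IsSymm) (hM : M.IsHermitian) (h : (K - M) * M = 0) :
    ∃ Q : Matrix n n ℝ, Q.IsSymm ∧ IsIdempotentElem Q ∧ Q.trace ≤ M.rank ∧ Q * K = M := by
  obtain ⟨Q, hQh, hQ, hQM, Y, rfl⟩ := hM.exists_isIdempotentElem_mul_eq_self
  refine ⟨Y * M, hQh.isSymm, hQ, ?_, ?_⟩
  · rw [trace_eq_rank_of_isIdempotentElem hQ]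
    exact_mod_cast rank_mul_le_right _ _
  · have h' : M * (K - M) = 0 := by
      simpa [hK.eq, hM.isSymm.eq] using congrArg transpose h
    calc Y * M * K = Y * (M * (K - M)) + Y * M * M := by rw [← mul_assoc, ← mul_add, sub_add_cancel]
      _ = M := by rw [h', mul_zero, zero_add, hQM]

variable {ι : Type*} [DecidableEq ι] {u : ι → Fin N → ℝ}

theorem frobSq_sum_smul_vecMulVec (hu : ∀ i j, u i ⬝ᵥ u j = if i = j then 1 else 0)
    (s : Finset ι) (a : ι → ℝ) :
    frobSq (∑ j ∈ s, a j • vecMulVec (u j) (u j)) = ∑ j ∈ s, a j ^ 2 := by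
  simp [frobSq_eq_trace, transpose_sum, transpose_vecMulVec,
    sum_smul_vecMulVec_mul_sum_smul_vecMulVec hu, trace_sum_smul_vecMulVec hu, sq]

variable [Fintype ι]

theorem frobSq_mul_sum_smul_vecMulVec (hu : ∀ i j, u i ⬝ᵥ u j = if i = j then 1 else 0)
    {Q : Matrix (Fin N) (Fin N) ℝ} (hQs : Q.IsSymm) (hQ : IsIdempotentElem Q) (a : ι → ℝ) :
    frobSq (Q * ∑ j, a j • vecMulVec (u j) (u j)) = ∑ j, a j ^ 2 * u j ⬝ᵥ (Q *ᵥ u j) := by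
  set K := ∑ j, a j • vecMulVec (u j) (u j)
  have hK : Kᵀ = K := by simp [K, transpose_sum, transpose_vecMulVec]
  have hKK : K * K = ∑ j, a j ^ 2 • vecMulVec (u j) (u j) := by
    simp [K, sum_smul_vecMulVec_mul_sum_smul_vecMulVec hu, sq]
  rw [frobSq_eq_trace, transpose_mul, hK, hQs.eq, mul_assoc, ← mul_assoc Q, hQ.eq,
    trace_mul_comm, mul_assoc, hKK, mul_sum, trace_sum]
  simp [mul_vecMulVec, dotProduct_comm]

theorem mul_sum_smul_vecMulVec_eq_of_frobSq_le
    (hu : ∀ i j, u i ⬝ᵥ u j = if i = j then 1 else 0) {lam : ι → ℝ} {A : Finset ι} {c : ℝ}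
    (hc : 0 ≤ c) (hA : ∀ j ∈ A, c < lam j ^ 2) (hAc : ∀ j ∉ A, lam j ^ 2 ≤ c)
    {Q : Matrix (Fin N) (Fin N) ℝ} (hQs : Q.IsSymm) (hQ : IsIdempotentElem Q) (hQA : Q.trace ≤ #A)
    (hle : frobSq (∑ j ∈ A, lam j • vecMulVec (u j) (u j)) ≤
      frobSq (Q * ∑ j, lam j • vecMulVec (u j) (u j))) :
    Q * ∑ j, lam j • vecMulVec (u j) (u j) = ∑ j ∈ A, lam j • vecMulVec (u j) (u j) := by
  have hQpsd : Q.PosSemidef := by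
    simpa [hQs.eq, hQ.eq] using posSemidef_conjTranspose_mul_self Q
  have hunit (j : ι) : u j ⬝ᵥ u j = 1 := by simp [hu]
  have hsq_nonneg (v : Fin N → ℝ) : 0 ≤ v ⬝ᵥ v := sum_nonneg fun i _ => mul_self_nonneg (v i)
  have hproj := mulVec_dotProduct_mulVec_of_isIdempotentElem hQs hQ
  have hcompl := sub_mulVec_dotProduct_sub_mulVec_of_isIdempotentElem hQs hQ
  have hs := eq_indicator_of_sum_le_sum_mul (s := fun j => u j ⬝ᵥ (Q *ᵥ u j)) hc hA hAc
    (fun j => hproj (u j) ▸ hsq_nonneg _)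
    (fun j => by linarith [hunit j ▸ hcompl (u j), hsq_nonneg (u j - Q *ᵥ u j)])
    ((sum_dotProduct_mulVec_le_trace hu hQpsd).trans hQA)
    (by rwa [frobSq_sum_smul_vecMulVec hu, frobSq_mul_sum_smul_vecMulVec hu hQs hQ] at hle)
  refine mul_sum_smul_vecMulVec_eq_of_mulVec_eq (fun j => ?_) lam
  split_ifs with hj
  · have h := hcompl (u j)
    rw [hunit, hs j, if_pos hj, sub_self, dotProduct_self_eq_zero, sub_eq_zero] at h
    exact h.symm
  · have h := hproj (u j)
    rwa [hs j, if_neg hj, dotProduct_self_eq_zero] at h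

end Frobenius

theorem optimal_spectral_prefix_unique_general {N r : ℕ}
    (K : Matrix (Fin N) (Fin N) ℝ)
    (hK : K.PosSemidef)
    (lam : Fin r → ℝ) (u : Fin r → (Fin N → ℝ))
    (hpos : ∀ j, 0 < lam j)
    (hmono : ∀ i j : Fin r, i ≤ j → lam j ≤ lam i)
    (hortho : ∀ i j : Fin r, u i ⬝ᵥ u j = if i = j then (1 : ℝ) else 0)
    (hdecomp : K = ∑ j, lam j • vecMulVec (u j) (u j))
    (k : ℕ) (hk1 : 1 ≤ k) (hkr : k ≤ r)
    (hgap : ∀ hk' : k < r,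
      lam ⟨k, hk'⟩ < lam ⟨k - 1, lt_of_lt_of_le (Nat.sub_lt hk1 one_pos) hkr⟩)
    (M : Matrix (Fin N) (Fin N) ℝ) (hM : M.PosSemidef) (hMrank : M.rank ≤ k)
    (hopt : ∀ M' : Matrix (Fin N) (Fin N) ℝ, M'.PosSemidef → M'.rank ≤ k →
      frobSq (K - M) ≤ frobSq (K - M')) :
    M = ∑ j ∈ Finset.univ.filter (fun j : Fin r => (j : ℕ) < k),
        lam j • vecMulVec (u j) (u j) := by
  set A := univ.filter fun j : Fin r => (j : ℕ) < k
  set P := ∑ j ∈ A, lam j • vecMulVec (u j) (u j)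
  have hKs : K.IsSymm := hK.isHermitian.isSymm
  have hMs : M.IsSymm := hM.isHermitian.isSymm
  have hcard : #A = k := by simp [A, Fin.card_filter_val_lt, hkr]
  have hPpsd : P.PosSemidef := posSemidef_sum_smul_vecMulVec A fun j _ => (hpos j).le
  have hPrank : P.rank ≤ k := by
    simpa [P, smul_vecMulVec, hcard] using rank_sum_vecMulVec_le A (fun j => lam j • u j) u
  have hstat : (K - M) * M = 0 := sub_mul_eq_zero_of_forall_frobSq_le hKs hMs fun B =>
    hopt _ (by simpa using hM.mul_mul_conjTranspose_same B)
      ((rank_mul_le_left _ _).trans ((rank_mul_le_right _ _).trans hMrank))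
  have hPM : frobSq P ≤ frobSq M := by
    have hKP : (K - P) * P = 0 :=
      hdecomp ▸ sum_sub_sum_smul_vecMulVec_mul_eq_zero hortho (subset_univ A) lam
    have h := hopt P hPpsd hPrank
    rwa [frobSq_sub_of_sub_mul_eq_zero hKs hMs hstat,
      frobSq_sub_of_sub_mul_eq_zero hKs hPpsd.isHermitian.isSymm hKP, sub_le_sub_iff_left] at h
  obtain ⟨Q, hQs, hQ, hQtr, hQK⟩ :=
    exists_projection_mul_eq_of_sub_mul_eq_zero hKs hM.isHermitian hstat
  obtain ⟨c, hc, hcA, hcAc⟩ := exists_sq_threshold hpos hmono fun hk _ => hgap hk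
  rw [← hQK, hdecomp]
  refine mul_sum_smul_vecMulVec_eq_of_frobSq_le hortho hc (fun j hj => hcA j (mem_filter.1 hj).2)
    (fun j hj => hcAc j (by simpa [A] using hj)) hQs hQ ?_ (hdecomp ▸ hQK ▸ hPM)
  rw [hcard]
  exact hQtr.trans (by exact_mod_cast hMrank)

/-- **Optimal spectral prefix (uniqueness).**
If `K` is an `N×N` real symmetric PSD matrix of rank `r` with spectral
decomposition `K = ∑ j, λ j • u j (u j)ᵀ` (eigenvalues positive and sorted
decreasingly, eigenvectors orthonormal), `1 ≤ k ≤ r`, and `λ_k > λ_{k+1}`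
(with `λ_{r+1} := 0`, which holds automatically when `k = r` since `λ_r > 0`),
then any PSD matrix `M` of rank at most `k` minimizing the squared Frobenius
distance to `K` over all PSD matrices of rank at most `k` equals the spectral
prefix `K_k = ∑_{j < k} λ j • u j (u j)ᵀ`. -/
theorem optimal_spectral_prefix_unique {N r : ℕ}
    (K : Matrix (Fin N) (Fin N) ℝ)
    (hK : K.PosSemidef) (hrank : K.rank = r)
    (lam : Fin r → ℝ) (u : Fin r → (Fin N → ℝ))
    (hpos : ∀ j, 0 < lam j)
    (hmono : ∀ i j : Fin r, i ≤ j → lam j ≤ lam i)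
    (hortho : ∀ i j : Fin r, u i ⬝ᵥ u j = if i = j then (1 : ℝ) else 0)
    (hdecomp : K = ∑ j, lam j • vecMulVec (u j) (u j))
    (k : ℕ) (hk1 : 1 ≤ k) (hkr : k ≤ r)
    (hgap : ∀ hk' : k < r,
      lam ⟨k, hk'⟩ < lam ⟨k - 1, lt_of_lt_of_le (Nat.sub_lt hk1 one_pos) hkr⟩)
    (M : Matrix (Fin N) (Fin N) ℝ) (hM : M.PosSemidef) (hMrank : M.rank ≤ k)
    (hopt : ∀ M' : Matrix (Fin N) (Fin N) ℝ, M'.PosSemidef → M'.rank ≤ k →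
      frobSq (K - M) ≤ frobSq (K - M')) :
    M = ∑ j ∈ Finset.univ.filter (fun j : Fin r => (j : ℕ) < k),
        lam j • vecMulVec (u j) (u j) :=
  optimal_spectral_prefix_unique_general K hK lam u hpos hmono hortho hdecomp k hk1 hkr hgap M hM
    hMrank hopt
end

section
/- Let K be an N×N real symmetric positive semidefinite matrix with eigenvalues λ_1 ≥ λ_2 ≥ ⋯ ≥ λ_N ≥ 0 (counted with multiplicity), and let M be an N×N real symmetric positive semidefinite matrix with rank(M) ≤ k whose positive eigenvalues are μ_1 ≥ ⋯ ≥ μ_k ≥ 0 (padding with zeros if rank(M) < k). Then ‖K − M‖_F² ≥ Σ_{i=1}^k (μ_i − λ_i)² + Σ_{j=k+1}^N λ_j². -/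
/-!
Write `K = U diag(λ) Uᵀ` and `M = V diag(μ) Vᵀ` with orthogonal `U`, `V`. Then
`‖K - M‖_F² = ∑ λᵢ² - 2 tr(KM) + ∑ μᵢ²` and `tr(KM) = λ ⬝ S μ`, where `S = W ⊙ W` with
`W = UᵀV` orthogonal, so `S` is doubly stochastic. By Birkhoff's theorem `S` is a convex
combination of permutation matrices, and the rearrangement inequality bounds each term by
`∑ λᵢ μᵢ` since `λ` and `μ` are both decreasing (von Neumann's trace inequality). Hence
`‖K - M‖_F² ≥ ∑ (λᵢ - μᵢ)²` (Hoffman–Wielandt). Finally `M` is PSD of rank at most `k`, so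
`μᵢ = 0` for `i ≥ k`, and the sum splits into the two sums of the claim.
-/

open Matrix Finset

theorem frobSq_eq_trace_mul_transpose {N : ℕ} (A : Matrix (Fin N) (Fin N) ℝ) :
    frobSq A = trace (A * Aᵀ) := by
  simp only [frobSq, trace, diag_apply, mul_apply, transpose_apply, sq]

section

variable {n : Type*} [Fintype n] [DecidableEq n]

theorem dotProduct_mulVec_le_of_mem_doublyStochastic {R : Type*} [Field R] [LinearOrder R]
    [IsStrictOrderedRing R] {S : Matrix n n R}
    (hS : S ∈ doublyStochastic R n) {a b : n → R} (hab : Monovary a b) :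
    a ⬝ᵥ (S *ᵥ b) ≤ a ⬝ᵥ b := by
  obtain ⟨w, hw_nonneg, hw_sum, rfl⟩ := exists_eq_sum_perm_of_mem_doublyStochastic hS
  calc a ⬝ᵥ ((∑ σ, w σ • σ.permMatrix R) *ᵥ b)
      = ∑ σ, w σ * ∑ i, a i * b (σ i) := by
        simp only [sum_mulVec, smul_mulVec, permMatrix_mulVec, dotProduct_sum, dotProduct_smul,
          smul_eq_mul]
        rfl
    _ ≤ ∑ σ, w σ * a ⬝ᵥ b :=
        sum_le_sum fun σ _ =>
          mul_le_mul_of_nonneg_left hab.sum_mul_comp_perm_le_sum_mul (hw_nonneg σ)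
    _ = a ⬝ᵥ b := by rw [← sum_mul, hw_sum, one_mul]

theorem hadamard_self_mem_doublyStochastic {R : Type*} [CommRing R] [LinearOrder R]
    [IsStrictOrderedRing R] {W : Matrix n n R} (hW : W ∈ orthogonalGroup n R) :
    W ⊙ W ∈ doublyStochastic R n := by
  refine mem_doublyStochastic_iff_sum.mpr ⟨fun i j => mul_self_nonneg _, fun i => ?_, fun j => ?_⟩
  · simpa [mul_apply] using congrFun₂ ((mem_orthogonalGroup_iff _ _).mp hW) i i
  · simpa [mul_apply] using congrFun₂ ((mem_orthogonalGroup_iff' _ _).mp hW) j j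

theorem transpose_mul_mem_orthogonalGroup {R : Type*} [CommRing R] {U V : Matrix n n R}
    (hU : U ∈ orthogonalGroup n R) (hV : V ∈ orthogonalGroup n R) :
    Uᵀ * V ∈ orthogonalGroup n R := by
  rw [mem_orthogonalGroup_iff, transpose_mul, transpose_transpose]
  calc Uᵀ * V * (Vᵀ * U) = Uᵀ * (V * Vᵀ) * U := by simp only [Matrix.mul_assoc]
    _ = 1 := by
      rw [(mem_orthogonalGroup_iff _ _).mp hV, Matrix.mul_one,
        (mem_orthogonalGroup_iff' _ _).mp hU]

theorem permMatrix_mem_orthogonalGroup {R : Type*} [CommRing R] (σ : Equiv.Perm n) :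
    σ.permMatrix R ∈ orthogonalGroup n R := by
  rw [mem_orthogonalGroup_iff, transpose_permMatrix, ← permMatrix_mul, inv_mul_cancel,
    permMatrix_one]

theorem transpose_permMatrix_mul_diagonal_mul_permMatrix {R : Type*} [Semiring R]
    (σ : Equiv.Perm n) (d : n → R) :
    (σ.permMatrix R)ᵀ * diagonal (d ∘ σ) * σ.permMatrix R = diagonal d := by
  ext i j
  simp only [Equiv.Perm.permMatrix, transpose_permMatrix, mul_apply, PEquiv.toMatrix_apply,
    Equiv.toPEquiv_apply, Equiv.Perm.coe_inv, Option.mem_def, Option.some.injEq,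
    Equiv.symm_apply_eq, diagonal_apply, Function.comp_apply, mul_ite, ite_mul, one_mul,
    zero_mul, mul_zero, sum_ite_eq', mem_univ, ↓reduceIte, mul_one]
  rw [Equiv.sum_comp σ (fun y => if y = j then if i = y then d y else 0 else 0)]
  by_cases h : i = j <;> simp [h]

theorem Matrix.IsHermitian.exists_orthogonal_eq_conj_diagonal_comp_perm {A : Matrix n n ℝ}
    (hA : A.IsHermitian) (σ : Equiv.Perm n) :
    ∃ U ∈ orthogonalGroup n ℝ, A = U * diagonal (hA.eigenvalues ∘ σ) * Uᵀ := by
  set U₀ : Matrix n n ℝ := (hA.eigenvectorUnitary : Matrix n n ℝ)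
  refine ⟨U₀ * (σ.permMatrix ℝ)ᵀ, mul_mem hA.eigenvectorUnitary.2 ?_, ?_⟩
  · rw [transpose_permMatrix]
    exact permMatrix_mem_orthogonalGroup _
  · calc A = U₀ * diagonal hA.eigenvalues * U₀ᵀ := by
          conv_lhs => rw [hA.spectral_theorem]
          simp [star_eq_conjTranspose, U₀]
      _ = _ := by
          rw [← transpose_permMatrix_mul_diagonal_mul_permMatrix σ]
          simp only [transpose_mul, transpose_transpose, Matrix.mul_assoc]

theorem Matrix.IsHermitian.rank_eq_card_eigenvalues_comp_perm_ne_zero {𝕜 : Type*} [RCLike 𝕜]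
    {A : Matrix n n 𝕜} (hA : A.IsHermitian) (σ : Equiv.Perm n) :
    A.rank = Fintype.card {i // (hA.eigenvalues ∘ σ) i ≠ 0} :=
  hA.rank_eq_card_non_zero_eigs.trans
    (Fintype.card_congr (σ.subtypeEquiv fun _ => Iff.rfl)).symm

theorem trace_diagonal_mul_mul_diagonal_mul_transpose {R : Type*} [CommSemiring R]
    (W : Matrix n n R) (d e : n → R) :
    trace (diagonal d * W * diagonal e * Wᵀ) = d ⬝ᵥ (W ⊙ W *ᵥ e) := by
  simp only [trace, diag_apply, mul_apply (M := diagonal d * W * diagonal e), mul_diagonal,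
    diagonal_mul, transpose_apply, dotProduct, mulVec, hadamard_apply, mul_sum]
  refine sum_congr rfl fun i _ => sum_congr rfl fun j _ => ?_
  ring

theorem trace_conj_diagonal_mul_conj_diagonal {R : Type*} [CommSemiring R]
    (U V : Matrix n n R) (d e : n → R) :
    trace (U * diagonal d * Uᵀ * (V * diagonal e * Vᵀ))
      = d ⬝ᵥ ((Uᵀ * V) ⊙ (Uᵀ * V) *ᵥ e) := by
  rw [← trace_diagonal_mul_mul_diagonal_mul_transpose]
  simp only [transpose_mul, transpose_transpose, Matrix.mul_assoc]
  rw [trace_mul_comm]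
  simp only [Matrix.mul_assoc]

theorem trace_conj_diagonal_mul_self {U : Matrix n n ℝ} (hU : U ∈ orthogonalGroup n ℝ)
    (d : n → ℝ) : trace (U * diagonal d * Uᵀ * (U * diagonal d * Uᵀ)) = d ⬝ᵥ d := by
  simp [trace_conj_diagonal_mul_conj_diagonal, (mem_orthogonalGroup_iff' _ _).mp hU,
    hadamard_one]

end

theorem sum_sq_sub_le_frobSq_conj_sub_conj {N : ℕ} {U V : Matrix (Fin N) (Fin N) ℝ}
    (hU : U ∈ orthogonalGroup (Fin N) ℝ) (hV : V ∈ orthogonalGroup (Fin N) ℝ)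
    {lam mu : Fin N → ℝ} (hlam_mu : Monovary lam mu) :
    ∑ i, (lam i - mu i) ^ 2 ≤ frobSq (U * diagonal lam * Uᵀ - V * diagonal mu * Vᵀ) := by
  set A := U * diagonal lam * Uᵀ
  set B := V * diagonal mu * Vᵀ
  have hAA : trace (A * A) = lam ⬝ᵥ lam := trace_conj_diagonal_mul_self hU lam
  have hBB : trace (B * B) = mu ⬝ᵥ mu := trace_conj_diagonal_mul_self hV mu
  have hAB : trace (A * B) ≤ lam ⬝ᵥ mu :=
    trace_conj_diagonal_mul_conj_diagonal U V lam mu ▸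
      dotProduct_mulVec_le_of_mem_doublyStochastic
        (hadamard_self_mem_doublyStochastic (transpose_mul_mem_orthogonalGroup hU hV)) hlam_mu
  have hA_symm : Aᵀ = A := by simp [A, Matrix.mul_assoc]
  have hB_symm : Bᵀ = B := by simp [B, Matrix.mul_assoc]
  have hfrob : frobSq (A - B) = trace (A * A) - 2 * trace (A * B) + trace (B * B) := by
    rw [frobSq_eq_trace_mul_transpose, transpose_sub, hA_symm, hB_symm, sub_mul, mul_sub,
      mul_sub, trace_sub, trace_sub, trace_sub, trace_mul_comm B A]
    ring
  have hexpand : ∑ i, (lam i - mu i) ^ 2 = lam ⬝ᵥ lam - 2 * lam ⬝ᵥ mu + mu ⬝ᵥ mu := by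
    simp only [dotProduct, mul_sum, ← sum_sub_distrib, ← sum_add_distrib]
    exact sum_congr rfl fun i _ => by ring
  rw [hexpand, hfrob, hAA, hBB]
  linarith

theorem Antitone.eq_zero_of_card_ne_zero_le {α : Type*} [PartialOrder α] [Zero α]
    [DecidableEq α] {N k : ℕ} {f : Fin N → α} (hf : Antitone f) (hf_nonneg : ∀ i, 0 ≤ f i)
    (hcard : Fintype.card {i // f i ≠ 0} ≤ k) {j : Fin N} (hj : k ≤ j) : f j = 0 := by
  by_contra hne
  have hsub : Iic j ⊆ univ.filter (fun i => f i ≠ 0) := fun i hi => by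
    simp only [mem_filter, mem_univ, true_and]
    intro hi0
    exact hne (le_antisymm (hi0 ▸ hf (mem_Iic.1 hi)) (hf_nonneg j))
  have hj_card := card_le_card hsub
  rw [Fin.card_Iic, ← Fintype.card_subtype] at hj_card
  omega

theorem sum_filter_sq_sub_add_sum_filter_not_sq {ι : Type*} [Fintype ι] (p : ι → Prop)
    [DecidablePred p] {a b : ι → ℝ} (hb : ∀ i, ¬ p i → b i = 0) :
    ∑ i ∈ univ.filter p, (b i - a i) ^ 2 + ∑ i ∈ univ.filter (fun i => ¬ p i), a i ^ 2
      = ∑ i, (a i - b i) ^ 2 := by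
  rw [← sum_filter_add_sum_filter_not univ p]
  congr 1
  · exact sum_congr rfl fun i _ => by ring
  · exact sum_congr rfl fun i hi => by rw [hb i (mem_filter.1 hi).2, sub_zero]

theorem frobSq_sub_lower_bound_general {N k : ℕ}
    (K M : Matrix (Fin N) (Fin N) ℝ)
    (hK : K.PosSemidef) (hM : M.PosSemidef) (hMrank : M.rank ≤ k)
    (lam mu : Fin N → ℝ)
    (hKenum : ∃ σ : Equiv.Perm (Fin N), lam = hK.1.eigenvalues ∘ σ)
    (hMenum : ∃ σ : Equiv.Perm (Fin N), mu = hM.1.eigenvalues ∘ σ)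
    (hlmono : ∀ i j : Fin N, i ≤ j → lam j ≤ lam i)
    (hmmono : ∀ i j : Fin N, i ≤ j → mu j ≤ mu i) :
    ∑ i ∈ Finset.univ.filter (fun i : Fin N => (i : ℕ) < k), (mu i - lam i) ^ 2
      + ∑ j ∈ Finset.univ.filter (fun j : Fin N => k ≤ (j : ℕ)), (lam j) ^ 2
      ≤ frobSq (K - M) := by
  obtain ⟨σ, rfl⟩ := hKenum
  obtain ⟨τ, rfl⟩ := hMenum
  obtain ⟨U, hU, hKU⟩ := hK.1.exists_orthogonal_eq_conj_diagonal_comp_perm σ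
  obtain ⟨V, hV, hMV⟩ := hM.1.exists_orthogonal_eq_conj_diagonal_comp_perm τ
  have hmu_tail (j : Fin N) (hj : ¬ (j : ℕ) < k) : (hM.1.eigenvalues ∘ τ) j = 0 :=
    Antitone.eq_zero_of_card_ne_zero_le hmmono (fun i => hM.eigenvalues_nonneg (τ i))
      (hM.1.rank_eq_card_eigenvalues_comp_perm_ne_zero τ ▸ hMrank) (not_lt.1 hj)
  calc _ = ∑ i, ((hK.1.eigenvalues ∘ σ) i - (hM.1.eigenvalues ∘ τ) i) ^ 2 := by
        simp only [← not_lt]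
        exact sum_filter_sq_sub_add_sum_filter_not_sq _ hmu_tail
    _ ≤ frobSq (U * diagonal (hK.1.eigenvalues ∘ σ) * Uᵀ
          - V * diagonal (hM.1.eigenvalues ∘ τ) * Vᵀ) :=
        sum_sq_sub_le_frobSq_conj_sub_conj hU hV (Antitone.monovary hlmono hmmono)
    _ = frobSq (K - M) := by rw [← hKU, ← hMV]

/-- **Lower bound on the Frobenius approximation error.**
Let `K` be an `N×N` real symmetric PSD matrix with eigenvalues `lam` listed in
decreasing order (with multiplicity), and let `M` be an `N×N` real symmetric
PSD matrix with `rank(M) ≤ k`, whose eigenvalues `mu` are listed in decreasing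
order (with multiplicity); since `M` is PSD of rank at most `k`, the first `k`
entries of `mu` are its positive eigenvalues padded with zeros. Then
`‖K − M‖_F² ≥ ∑_{i=1}^k (μ_i − λ_i)² + ∑_{j=k+1}^N λ_j²`. -/
theorem frobSq_sub_lower_bound {N k : ℕ} (hkN : k ≤ N)
    (K M : Matrix (Fin N) (Fin N) ℝ)
    (hK : K.PosSemidef) (hM : M.PosSemidef) (hMrank : M.rank ≤ k)
    (lam mu : Fin N → ℝ)
    (hKenum : ∃ σ : Equiv.Perm (Fin N), lam = hK.1.eigenvalues ∘ σ)
    (hMenum : ∃ σ : Equiv.Perm (Fin N), mu = hM.1.eigenvalues ∘ σ)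
    (hlmono : ∀ i j : Fin N, i ≤ j → lam j ≤ lam i)
    (hmmono : ∀ i j : Fin N, i ≤ j → mu j ≤ mu i) :
    ∑ i ∈ Finset.univ.filter (fun i : Fin N => (i : ℕ) < k), (mu i - lam i) ^ 2
      + ∑ j ∈ Finset.univ.filter (fun j : Fin N => k ≤ (j : ℕ)), (lam j) ^ 2
      ≤ frobSq (K - M) :=
  frobSq_sub_lower_bound_general K M hK hM hMrank lam mu hKenum hMenum hlmono hmmono
end

section
/- Let F : ℝ^m × ℝ → ℝ be twice continuously differentiable, let η₀ ∈ ℝ, and let x₀ ∈ ℝ^m satisfy ∇ₓF(x₀, η₀) = 0 with the Hessian ∇ₓ²F(x₀, η₀) positive definite. Then there exist an open interval U containing η₀ and a continuously differentiable map x* : U → ℝ^m with x*(η₀) = x₀ such that, for every η ∈ U: (a) ∇ₓF(x*(η), η) = 0; (b) ∇ₓ²F(x*(η), η) is positive definite; and (c) x*(η) is a strict local minimum of x ↦ F(x, η). -/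
/-!
The critical points of `x ↦ F (x, η)` are the zeros of the gradient map `(η, x) ↦ ∇ₓF (x, η)`,
which is `C¹` and whose partial derivative in `x` is the Hessian. A positive definite Hessian is
invertible, so the implicit function theorem yields the `C¹` branch `η ↦ x*(η)`. Positive
definiteness is an open condition (by compactness of the unit sphere), so it holds near the branch;
there, along each segment issuing from `x*(η)`, the derivative of `F (·, η)` starts at `0` and is
strictly increasing, which makes `x*(η)` a strict local minimum.
-/

open Filter Topology Set

variable {E : Type*} [NormedAddCommGroup E] [NormedSpace ℝ E]

def IsPosDefForm (B : E →L[ℝ] E →L[ℝ] ℝ) : Prop :=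
  ∀ v, v ≠ 0 → 0 < B v v

theorem IsPosDefForm.injective {B : E →L[ℝ] E →L[ℝ] ℝ} (hB : IsPosDefForm B) :
    Function.Injective B := by
  refine (injective_iff_map_eq_zero B).mpr fun v hv => ?_
  by_contra hne
  simpa [hv] using hB v hne

theorem IsPosDefForm.isInvertible [FiniteDimensional ℝ E] {B : E →L[ℝ] E →L[ℝ] ℝ}
    (hB : IsPosDefForm B) : B.IsInvertible := by
  have hdim : Module.finrank ℝ E = Module.finrank ℝ (E →L[ℝ] ℝ) := by
    rw [← LinearMap.toContinuousLinearMap.finrank_eq, Module.finrank_linearMap,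
      Module.finrank_self, mul_one]
  exact ⟨(LinearMap.linearEquivOfInjective (B : E →ₗ[ℝ] E →L[ℝ] ℝ) hB.injective
    hdim).toContinuousLinearEquiv, rfl⟩

theorem isOpen_setOf_isPosDefForm [FiniteDimensional ℝ E] :
    IsOpen {B : E →L[ℝ] E →L[ℝ] ℝ | IsPosDefForm B} := by
  refine isOpen_iff_mem_nhds.mpr fun B₀ hB₀ => ?_
  have hsphere : ∀ᶠ B in 𝓝 B₀, ∀ u ∈ Metric.sphere (0 : E) 1, 0 < B u u := by
    refine (isCompact_sphere 0 1).eventually_forall_of_forall_eventually fun u hu => ?_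
    have hcont : Continuous fun p : (E →L[ℝ] E →L[ℝ] ℝ) × E => p.1 p.2 p.2 := by fun_prop
    exact (isOpen_lt continuous_const hcont).mem_nhds
      (hB₀ u (ne_zero_of_mem_sphere one_ne_zero ⟨u, hu⟩))
  filter_upwards [hsphere] with B hB v hv
  have hnorm : 0 < ‖v‖⁻¹ := inv_pos.mpr (norm_pos_iff.mpr hv)
  have hu : ‖v‖⁻¹ • v ∈ Metric.sphere (0 : E) 1 := by
    simp [norm_smul, inv_mul_cancel₀ (norm_ne_zero_iff.mpr hv)]
  have h := hB _ hu
  simp only [map_smul, FunLike.coe_smul, Pi.smul_apply, smul_eq_mul] at h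
  exact pos_of_mul_pos_right (pos_of_mul_pos_right h hnorm.le) hnorm.le

theorem lt_of_hasDerivAt_of_deriv_zero_of_second_deriv_pos {g g' g'' : ℝ → ℝ}
    (hg : ∀ t, HasDerivAt g (g' t) t) (hg' : ∀ t, HasDerivAt g' (g'' t) t) (h₀ : g' 0 = 0)
    (hpos : ∀ t ∈ Ioo 0 1, 0 < g'' t) : g 0 < g 1 := by
  have hmono' : StrictMonoOn g' (Icc 0 1) :=
    strictMonoOn_of_hasDerivWithinAt_pos (convex_Icc 0 1)
      (fun t _ => (hg' t).continuousAt.continuousWithinAt)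
      (fun t _ => (hg' t).hasDerivWithinAt) (by simpa using hpos)
  have hmono : StrictMonoOn g (Icc 0 1) := by
    refine strictMonoOn_of_hasDerivWithinAt_pos (convex_Icc 0 1)
      (fun t _ => (hg t).continuousAt.continuousWithinAt)
      (fun t _ => (hg t).hasDerivWithinAt) fun t ht => ?_
    rw [interior_Icc] at ht
    simpa [h₀] using hmono' (left_mem_Icc.mpr zero_le_one) (Ioo_subset_Icc_self ht) ht.1
  exact hmono (left_mem_Icc.mpr zero_le_one) (right_mem_Icc.mpr zero_le_one) zero_lt_one

theorem lt_of_fderiv_eq_zero_of_isPosDefForm_on_segment {f : E → ℝ} (hf : ContDiff ℝ 2 f)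
    {c x : E} (hc : fderiv ℝ f c = 0)
    (hpd : ∀ y ∈ segment ℝ c x, IsPosDefForm (fderiv ℝ (fderiv ℝ f) y)) (hx : x ≠ c) :
    f c < f x := by
  have hf' : Differentiable ℝ f := hf.differentiable two_ne_zero
  have hf'' : Differentiable ℝ (fderiv ℝ f) :=
    (hf.fderiv_right (m := 1) le_rfl).differentiable one_ne_zero
  set v := x - c
  have hline : ∀ t : ℝ, HasDerivAt (fun t : ℝ => c + t • v) v t := fun t => by
    simpa using ((hasDerivAt_id t).smul_const v).const_add c
  have hseg : ∀ t ∈ Icc (0 : ℝ) 1, c + t • v ∈ segment ℝ c x := fun t ht => by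
    rw [segment_eq_image_lineMap]
    exact ⟨t, ht, by simp [AffineMap.lineMap_apply, v, add_comm]⟩
  have hlt := lt_of_hasDerivAt_of_deriv_zero_of_second_deriv_pos
    (g := fun t => f (c + t • v)) (g' := fun t => fderiv ℝ f (c + t • v) v)
    (g'' := fun t => fderiv ℝ (fderiv ℝ f) (c + t • v) v v)
    (fun t => (hf' _).hasFDerivAt.comp_hasDerivAt t (hline t))
    (fun t => by
      simpa using ((hf'' _).hasFDerivAt.comp_hasDerivAt t (hline t)).clm_apply
        (hasDerivAt_const t v))
    (by simp [hc]) (fun t ht => hpd _ (hseg t (Ioo_subset_Icc_self ht)) _ (sub_ne_zero.mpr hx))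
  simpa [v] using hlt

theorem exists_mem_nhds_lt_of_fderiv_eq_zero_of_isPosDefForm {f : E → ℝ} (hf : ContDiff ℝ 2 f)
    {c : E} (hc : fderiv ℝ f c = 0)
    (hpd : ∀ᶠ x in 𝓝 c, IsPosDefForm (fderiv ℝ (fderiv ℝ f) x)) :
    ∃ V ∈ 𝓝 c, ∀ x ∈ V, x ≠ c → f c < f x := by
  obtain ⟨r, hr, hball⟩ := Metric.eventually_nhds_iff_ball.mp hpd
  refine ⟨Metric.ball c r, Metric.ball_mem_nhds c hr, fun x hx hne => ?_⟩
  exact lt_of_fderiv_eq_zero_of_isPosDefForm_on_segment hf hc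
    (fun y hy => hball y ((convex_ball c r).segment_subset (Metric.mem_ball_self hr) hx hy)) hne

theorem fderiv_comp_inr {𝕜 P G : Type*} [NontriviallyNormedField 𝕜] [NormedAddCommGroup P]
    [NormedSpace 𝕜 P] [NormedAddCommGroup G] [NormedSpace 𝕜 G] {E : Type*} [NormedAddCommGroup E]
    [NormedSpace 𝕜 E] {f : P × E → G} {u : P × E} (hf : DifferentiableAt 𝕜 f u) :
    fderiv 𝕜 f u ∘L .inr 𝕜 P E = fderiv 𝕜 (fun y => f (u.1, y)) u.2 :=
  (hf.hasFDerivAt.comp u.2 (hasFDerivAt_prodMk_right u.1 u.2)).fderiv.symm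

theorem exists_contDiffAt_branch_of_fderiv_eq_zero [FiniteDimensional ℝ E] {F : E × ℝ → ℝ}
    (hF : ContDiff ℝ 2 F) {η₀ : ℝ} {x₀ : E} (hcrit : fderiv ℝ (fun y => F (y, η₀)) x₀ = 0)
    (hpd : IsPosDefForm (fderiv ℝ (fun y => fderiv ℝ (fun z => F (z, η₀)) y) x₀)) :
    ∃ xs : ℝ → E, xs η₀ = x₀ ∧ ContDiffAt ℝ 1 xs η₀ ∧
      ∀ᶠ η in 𝓝 η₀, fderiv ℝ (fun y => F (y, η)) (xs η) = 0 := by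
  have hgrad : ContDiffAt ℝ 1 (fun q : ℝ × E => fderiv ℝ (fun y => F (y, q.1)) q.2) (η₀, x₀) :=
    (by fun_prop : ContDiff ℝ 1 _).contDiffAt
  have hinv : (fderiv ℝ (fun q : ℝ × E => fderiv ℝ (fun y => F (y, q.1)) q.2) (η₀, x₀)
      ∘L .inr ℝ ℝ E).IsInvertible := by
    rw [fderiv_comp_inr (hgrad.differentiableAt one_ne_zero)]
    exact hpd.isInvertible
  refine ⟨hgrad.implicitFunction one_ne_zero hinv, hgrad.implicitFunction_apply_self _ hinv,
    hgrad.contDiffAt_implicitFunction _ hinv, ?_⟩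
  simpa [hcrit] using hgrad.eventually_apply_implicitFunction one_ne_zero hinv

/-- **A `C¹` branch of nondegenerate local minima.**
Let `F : ℝ^m × ℝ → ℝ` be twice continuously differentiable, and suppose
`x₀` is a critical point of `x ↦ F(x, η₀)` whose Hessian (second derivative
bilinear form in `x`) at `(x₀, η₀)` is positive definite. Then there is an
open interval `U = (a, b)` containing `η₀` and a continuously differentiable
map `x* : U → ℝ^m` with `x*(η₀) = x₀` such that for every `η ∈ U`:
(a) `∇ₓF(x*(η), η) = 0`; (b) the Hessian of `x ↦ F(x, η)` at `x*(η)` is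
positive definite; and (c) `x*(η)` is a strict local minimum of
`x ↦ F(x, η)`. -/
theorem branch_of_strict_local_minima {m : ℕ}
    (F : (Fin m → ℝ) × ℝ → ℝ) (hF : ContDiff ℝ 2 F)
    (η₀ : ℝ) (x₀ : Fin m → ℝ)
    (hcrit : fderiv ℝ (fun y => F (y, η₀)) x₀ = 0)
    (hpd : ∀ v : Fin m → ℝ, v ≠ 0 →
      0 < fderiv ℝ (fun y => fderiv ℝ (fun z => F (z, η₀)) y) x₀ v v) :
    ∃ (a b : ℝ) (xs : ℝ → (Fin m → ℝ)),
      a < η₀ ∧ η₀ < b ∧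
      ContDiffOn ℝ 1 xs (Set.Ioo a b) ∧
      xs η₀ = x₀ ∧
      ∀ η ∈ Set.Ioo a b,
        (fderiv ℝ (fun y => F (y, η)) (xs η) = 0) ∧
        (∀ v : Fin m → ℝ, v ≠ 0 →
          0 < fderiv ℝ (fun y => fderiv ℝ (fun z => F (z, η)) y) (xs η) v v) ∧
        (∃ V ∈ 𝓝 (xs η), ∀ x ∈ V, x ≠ xs η → F (xs η, η) < F (x, η)) := by
  obtain ⟨xs, hxs₀, hxs, hcrit_xs⟩ := exists_contDiffAt_branch_of_fderiv_eq_zero hF hcrit hpd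
  obtain ⟨u, hu, hxs_u⟩ := hxs.contDiffOn le_rfl (by simp)
  have hpd_near : ∀ᶠ q in 𝓝 (η₀, x₀), ∀ᶠ q' in 𝓝 q,
      IsPosDefForm (fderiv ℝ (fun y => fderiv ℝ (fun z => F (z, q'.1)) y) q'.2) :=
    eventually_eventually_nhds.mpr <|
      (isOpen_setOf_isPosDefForm.preimage (by fun_prop)).mem_nhds hpd
  have hbranch : Tendsto (fun η => (η, xs η)) (𝓝 η₀) (𝓝 (η₀, x₀)) :=
    tendsto_id.prodMk_nhds (hxs₀ ▸ hxs.continuousAt)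
  obtain ⟨⟨a, b⟩, ⟨ha, hb⟩, hab⟩ := (nhds_basis_Ioo η₀).mem_iff.mp
    (hcrit_xs.and ((hbranch.eventually hpd_near).and hu))
  refine ⟨a, b, xs, ha, hb, hxs_u.mono fun η hη => (hab hη).2.2, hxs₀, fun η hη => ?_⟩
  obtain ⟨hcrit_η, hpd_η, -⟩ := hab hη
  refine ⟨hcrit_η, hpd_η.self_of_nhds, ?_⟩
  exact exists_mem_nhds_lt_of_fderiv_eq_zero_of_isPosDefForm (by fun_prop) hcrit_η
    ((Continuous.prodMk_right η).tendsto (xs η) |>.eventually hpd_η)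
end

section
/- Let Φ, h : ℝ^m → ℝ be twice continuously differentiable and set F(x, η) = Φ(x) − η·h(x). Let η₀ ∈ ℝ and x₀ ∈ ℝ^m satisfy ∇ₓF(x₀, η₀) = 0 with ∇ₓ²F(x₀, η₀) positive definite, and let x* : U → ℝ^m be a continuously differentiable map on an open interval U ∋ η₀ with x*(η₀) = x₀, ∇ₓF(x*(η), η) = 0, and H(η) := ∇ₓ²F(x*(η), η) positive definite for every η ∈ U. Then the capacity profile η ↦ h(x*(η)) is continuously differentiable on U and its derivative equals ∇h(x*(η))ᵀ H(η)^{-1} ∇h(x*(η)) for every η ∈ U. -/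
/-!
Differentiating the critical-point identity `∇Φ(x*(t)) − t ∇h(x*(t)) = 0` at `t = η` gives
`H(η) x*'(η) = ∇h(x*(η))`. Positive definiteness makes `H(η)` injective, so `x*'(η)` is the
solution `w` of `H(η) w = ∇h(x*(η))`, and the chain rule gives
`(h ∘ x*)'(η) = ∇h(x*(η)) · x*'(η) = ∇h(x*(η)) · w`.
-/

open Filter Topology

section

variable {E : Type*} [NormedAddCommGroup E] [NormedSpace ℝ E]

lemma fderiv_sub_const_mul {Φ h : E → ℝ} {y : E}
    (hΦ : DifferentiableAt ℝ Φ y) (hh : DifferentiableAt ℝ h y) (η : ℝ) :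
    fderiv ℝ (fun z => Φ z - η * h z) y = fderiv ℝ Φ y - η • fderiv ℝ h y := by
  rw [fderiv_fun_sub hΦ (hh.const_mul η), fderiv_const_mul hh]

lemma fderiv_fderiv_sub_const_mul {Φ h : E → ℝ} {y : E}
    (hΦ : Differentiable ℝ Φ) (hh : Differentiable ℝ h)
    (hΦ' : DifferentiableAt ℝ (fderiv ℝ Φ) y) (hh' : DifferentiableAt ℝ (fderiv ℝ h) y)
    (η : ℝ) :
    fderiv ℝ (fun x => fderiv ℝ (fun z => Φ z - η * h z) x) y
      = fderiv ℝ (fderiv ℝ Φ) y - η • fderiv ℝ (fderiv ℝ h) y := by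
  have hfun : (fun x => fderiv ℝ (fun z => Φ z - η * h z) x)
      = fun x => fderiv ℝ Φ x - η • fderiv ℝ h x :=
    funext fun x => fderiv_sub_const_mul (hΦ x) (hh x) η
  rw [hfun, fderiv_fun_sub hΦ' (hh'.fun_const_smul η), fderiv_fun_const_smul hh']

lemma fderiv_fderiv_sub_const_mul_apply_deriv_of_eventually_critical {Φ h : E → ℝ}
    {xs : ℝ → E} {η : ℝ}
    (hΦ : Differentiable ℝ Φ) (hh : Differentiable ℝ h)
    (hΦ' : DifferentiableAt ℝ (fderiv ℝ Φ) (xs η))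
    (hh' : DifferentiableAt ℝ (fderiv ℝ h) (xs η))
    (hxs : DifferentiableAt ℝ xs η)
    (hcrit : ∀ᶠ t in 𝓝 η, fderiv ℝ (fun z => Φ z - t * h z) (xs t) = 0) :
    fderiv ℝ (fun y => fderiv ℝ (fun z => Φ z - η * h z) y) (xs η) (deriv xs η)
      = fderiv ℝ h (xs η) := by
  set v := deriv xs η
  set AΦ := fderiv ℝ (fderiv ℝ Φ) (xs η)
  set Ah := fderiv ℝ (fderiv ℝ h) (xs η)
  have hderiv : HasDerivAt (fun t => fderiv ℝ Φ (xs t) - t • fderiv ℝ h (xs t))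
      (AΦ v - (η • Ah v + (1 : ℝ) • fderiv ℝ h (xs η))) η :=
    (hΦ'.hasFDerivAt.comp_hasDerivAt η hxs.hasDerivAt).sub
      ((hasDerivAt_id η).smul (hh'.hasFDerivAt.comp_hasDerivAt η hxs.hasDerivAt))
  have hderiv_zero : HasDerivAt (fun t => fderiv ℝ Φ (xs t) - t • fderiv ℝ h (xs t)) 0 η := by
    refine (hasDerivAt_const η 0).congr_of_eventuallyEq ?_
    filter_upwards [hcrit] with t ht
    rwa [← fderiv_sub_const_mul (hΦ _) (hh _)]
  have hsolve : AΦ v - η • Ah v = fderiv ℝ h (xs η) := by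
    have := sub_eq_zero.mp (hderiv.unique hderiv_zero)
    rw [one_smul] at this
    rw [this]
    abel
  rw [fderiv_fderiv_sub_const_mul hΦ hh hΦ' hh', sub_apply, smul_apply, hsolve]

end

lemma injective_of_forall_pos_apply_self {E : Type*} [AddCommGroup E] [Module ℝ E]
    [TopologicalSpace E] {B : E →L[ℝ] E →L[ℝ] ℝ} (hB : ∀ v, v ≠ 0 → 0 < B v v) :
    Function.Injective B := by
  intro u w huw
  by_contra hne
  have hpos := hB (u - w) (sub_ne_zero.mpr hne)
  rw [map_sub B u w, huw, sub_self, zero_apply] at hpos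
  exact lt_irrefl 0 hpos

theorem capacity_profile_deriv_general {m : ℕ}
    (Φ h : (Fin m → ℝ) → ℝ)
    (hΦ : ContDiff ℝ 2 Φ) (hh : ContDiff ℝ 2 h)
    (a b : ℝ)
    (xs : ℝ → (Fin m → ℝ))
    (hxs : ContDiffOn ℝ 1 xs (Set.Ioo a b))
    (hcrit : ∀ η ∈ Set.Ioo a b,
      fderiv ℝ (fun z => Φ z - η * h z) (xs η) = 0)
    (hpd : ∀ η ∈ Set.Ioo a b, ∀ v : Fin m → ℝ, v ≠ 0 →
      0 < fderiv ℝ (fun y => fderiv ℝ (fun z => Φ z - η * h z) y) (xs η) v v) :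
    ContDiffOn ℝ 1 (fun η => h (xs η)) (Set.Ioo a b) ∧
    ∀ η ∈ Set.Ioo a b, ∀ w : Fin m → ℝ,
      fderiv ℝ (fun y => fderiv ℝ (fun z => Φ z - η * h z) y) (xs η) w
          = fderiv ℝ h (xs η) →
      deriv (fun t => h (xs t)) η = fderiv ℝ h (xs η) w := by
  have hΦ' := (hΦ.fderiv_right (m := 1) le_rfl).differentiable one_ne_zero
  have hh' := (hh.fderiv_right (m := 1) le_rfl).differentiable one_ne_zero
  have hh1 := hh.differentiable two_ne_zero
  refine ⟨(hh.of_le one_le_two).comp_contDiffOn hxs, fun η hη w hw => ?_⟩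
  have hU : Set.Ioo a b ∈ 𝓝 η := Ioo_mem_nhds hη.1 hη.2
  have hxs_diff : DifferentiableAt ℝ xs η := (hxs.contDiffAt hU).differentiableAt one_ne_zero
  have hv := fderiv_fderiv_sub_const_mul_apply_deriv_of_eventually_critical
    (hΦ.differentiable two_ne_zero) hh1 (hΦ' _) (hh' _) hxs_diff
    (eventually_of_mem hU hcrit)
  have hvw : deriv xs η = w := injective_of_forall_pos_apply_self (hpd η hη) (hv.trans hw.symm)
  have hchain : HasDerivAt (fun t => h (xs t)) (fderiv ℝ h (xs η) (deriv xs η)) η :=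
    (hh1 _).hasFDerivAt.comp_hasDerivAt η hxs_diff.hasDerivAt
  rw [hchain.deriv, hvw]

/-- **Derivative of the capacity profile along a nondegenerate branch.**
Let `Φ, h : ℝ^m → ℝ` be twice continuously differentiable, set
`F(x, η) = Φ(x) − η·h(x)`, and let `x₀` be a critical point of
`x ↦ F(x, η₀)` with positive definite Hessian. Let `x*` be a continuously
differentiable map on an open interval `U = (a, b) ∋ η₀` with `x*(η₀) = x₀`,
`∇ₓF(x*(η), η) = 0`, and `H(η) := ∇ₓ²F(x*(η), η)` positive definite for
every `η ∈ U`. Then `η ↦ h(x*(η))` is continuously differentiable on `U`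
and its derivative equals `∇h(x*(η))ᵀ H(η)⁻¹ ∇h(x*(η))`: for any `w` solving
`H(η) w = ∇h(x*(η))` (read as linear functionals; such `w` exists and is
unique since `H(η)` is positive definite), the derivative equals
`∇h(x*(η)) · w`. -/
theorem capacity_profile_deriv {m : ℕ}
    (Φ h : (Fin m → ℝ) → ℝ)
    (hΦ : ContDiff ℝ 2 Φ) (hh : ContDiff ℝ 2 h)
    (η₀ : ℝ) (x₀ : Fin m → ℝ)
    (hcrit₀ : fderiv ℝ (fun z => Φ z - η₀ * h z) x₀ = 0)
    (hpd₀ : ∀ v : Fin m → ℝ, v ≠ 0 →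
      0 < fderiv ℝ (fun y => fderiv ℝ (fun z => Φ z - η₀ * h z) y) x₀ v v)
    (a b : ℝ) (ha : a < η₀) (hb : η₀ < b)
    (xs : ℝ → (Fin m → ℝ))
    (hxs : ContDiffOn ℝ 1 xs (Set.Ioo a b))
    (hxs₀ : xs η₀ = x₀)
    (hcrit : ∀ η ∈ Set.Ioo a b,
      fderiv ℝ (fun z => Φ z - η * h z) (xs η) = 0)
    (hpd : ∀ η ∈ Set.Ioo a b, ∀ v : Fin m → ℝ, v ≠ 0 →
      0 < fderiv ℝ (fun y => fderiv ℝ (fun z => Φ z - η * h z) y) (xs η) v v) :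
    ContDiffOn ℝ 1 (fun η => h (xs η)) (Set.Ioo a b) ∧
    ∀ η ∈ Set.Ioo a b, ∀ w : Fin m → ℝ,
      fderiv ℝ (fun y => fderiv ℝ (fun z => Φ z - η * h z) y) (xs η) w
          = fderiv ℝ h (xs η) →
      deriv (fun t => h (xs t)) η = fderiv ℝ h (xs η) w :=
  capacity_profile_deriv_general Φ h hΦ hh a b xs hxs hcrit hpd
end
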